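/- arXiv:2304.10003 — 6 statements merged into one kernel-verified Lean document; each statement's English description precedes it below -/
import Mathlib

section
/- For all nonnegative integers m, n and any real (or complex) number x, 1 = (1-x)^(n+1) * Σ_{k=0}^{m} C(n+k, k) x^k + x^(m+1) * Σ_{k=0}^{n} C(m+k, k) (1-x)^k, where C denotes the binomial coefficient. -/
lemma chaundy_bullard_aux (m n : ℕ) (x : ℂ) :
    (∑ k ∈ Finset.range (n + 1), ((m + k).choose k : ℂ) * (1 - x) ^ k)
      - x * ∑ k ∈ Finset.range (n + 1), ((m + 1 + k).choose k : ℂ) * (1 - x) ^ k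
    = ((m + n + 1).choose n : ℂ) * (1 - x) ^ (n + 1) := by
  induction n with
  | zero => simp
  | succ n ih =>
      rw [Finset.sum_range_succ _ (n + 1), Finset.sum_range_succ _ (n + 1)]
      have hp : ((m + (n + 1) + 1).choose (n + 1) : ℂ)
          = ((m + n + 1).choose n : ℂ) + ((m + n + 1).choose (n + 1) : ℂ) := by
        have h2 : m + (n + 1) + 1 = (m + n + 1) + 1 := by ring
        rw [h2, Nat.choose_succ_succ (m + n + 1) n]
        push_cast
        ring
      have hc : ((m + 1 + (n + 1)).choose (n + 1) : ℂ)
          = ((m + (n + 1) + 1).choose (n + 1) : ℂ) := by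
        rw [show m + 1 + (n + 1) = m + (n + 1) + 1 from by omega]
      have h3 : ((m + (n + 1)).choose (n + 1) : ℂ) = ((m + n + 1).choose (n + 1) : ℂ) := rfl
      rw [hc, hp, h3]
      linear_combination ih

theorem chaundy_bullard (m n : ℕ) (x : ℂ) :
    1 = (1 - x) ^ (n + 1) * ∑ k ∈ Finset.range (m + 1), ((n + k).choose k : ℂ) * x ^ k
      + x ^ (m + 1) * ∑ k ∈ Finset.range (n + 1), ((m + k).choose k : ℂ) * (1 - x) ^ k := by
  induction m with
  | zero =>
      have hg := geom_sum_mul (1 - x) (n + 1)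
      have h : (∑ k ∈ Finset.range (n + 1), ((0 + k).choose k : ℂ) * (1 - x) ^ k)
          = ∑ k ∈ Finset.range (n + 1), (1 - x) ^ k := by
        refine Finset.sum_congr rfl fun k _ => ?_
        simp
      rw [h, Finset.sum_range_one]
      norm_num
      linear_combination hg
  | succ m ih =>
      rw [Finset.sum_range_succ]
      have key := chaundy_bullard_aux m n x
      have hc : ((n + (m + 1)).choose (m + 1) : ℂ) = ((m + n + 1).choose n : ℂ) := by
        have h := Nat.choose_symm_of_eq_add (show n + (m + 1) = (m + 1) + n from by omega)
        rw [show m + n + 1 = n + (m + 1) from by omega]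
        exact_mod_cast h
      calc (1 : ℂ) = (1 - x) ^ (n + 1) * ∑ k ∈ Finset.range (m + 1), ((n + k).choose k : ℂ) * x ^ k
          + x ^ (m + 1) * ∑ k ∈ Finset.range (n + 1), ((m + k).choose k : ℂ) * (1 - x) ^ k := ih
        _ = _ := by
            rw [hc]
            linear_combination x ^ (m + 1) * key
end

section
/- For all nonnegative integers m, n and elements x, y of a commutative ring, (x+y)^(m+n+1) = y^(n+1) Σ_{k=0}^{m} C(n+k,k) x^k (x+y)^(m-k) + x^(m+1) Σ_{k=0}^{n} C(m+k,k) y^k (x+y)^(n-k). -/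
private lemma cb_split {R : Type*} [CommRing R] (a n : ℕ) (z u : R) :
    ∑ k ∈ Finset.range (n + 2), ((a + k).choose k : R) * z ^ k * u ^ (n + 1 - k)
      = u * ∑ k ∈ Finset.range (n + 1), ((a + k).choose k : R) * z ^ k * u ^ (n - k)
        + ((a + n + 1).choose (n + 1) : R) * z ^ (n + 1) := by
  rw [Finset.sum_range_succ, Nat.sub_self, pow_zero, mul_one,
    show a + (n + 1) = a + n + 1 from by omega, Finset.mul_sum]
  congr 1
  apply Finset.sum_congr rfl
  intro k hk
  have hk' : k ≤ n := Nat.lt_succ_iff.mp (Finset.mem_range.mp hk)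
  rw [show n + 1 - k = (n - k) + 1 from by omega, pow_succ]
  ring

private lemma cb_shift {R : Type*} [CommRing R] (m n : ℕ) (x y : R) :
    (x + y) * ∑ k ∈ Finset.range (n + 1), ((m + k).choose k : R) * y ^ k * (x + y) ^ (n - k)
      = x * ∑ k ∈ Finset.range (n + 1), ((m + 1 + k).choose k : R) * y ^ k * (x + y) ^ (n - k)
        + ((m + n + 1).choose n : R) * y ^ (n + 1) := by
  induction n with
  | zero => simp [add_comm]
  | succ n ih =>
    have h1 := cb_split m n y (x + y)
    have h2 := cb_split (m + 1) n y (x + y)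
    rw [show n + 1 + 1 = n + 2 from rfl] at *
    rw [h1, h2, show m + 1 + n + 1 = m + n + 1 + 1 from by omega,
      show m + (n + 1) + 1 = m + n + 1 + 1 from by omega, Nat.choose_succ_succ (m + n + 1) n]
    push_cast
    linear_combination (x + y) * ih

private lemma cb_base {R : Type*} [CommRing R] (n : ℕ) (x y : R) :
    (x + y) ^ (n + 1)
      = y ^ (n + 1)
        + x * ∑ k ∈ Finset.range (n + 1), ((0 + k).choose k : R) * y ^ k * (x + y) ^ (n - k) := by
  induction n with
  | zero => simp; ring
  | succ n ih =>
    rw [show n + 1 + 1 = n + 2 from rfl, cb_split 0 n y (x + y)]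
    have h : (x + y) ^ (n + 2) = (x + y) * (x + y) ^ (n + 1) := by ring
    rw [h, ih]
    simp [Nat.choose_self]
    ring

theorem chaundy_bullard_homogeneous {R : Type*} [CommRing R] (m n : ℕ) (x y : R) :
    (x + y) ^ (m + n + 1)
      = y ^ (n + 1) * ∑ k ∈ Finset.range (m + 1),
          ((n + k).choose k : R) * x ^ k * (x + y) ^ (m - k)
      + x ^ (m + 1) * ∑ k ∈ Finset.range (n + 1),
          ((m + k).choose k : R) * y ^ k * (x + y) ^ (n - k) := by
  induction m with
  | zero =>
    simpa using cb_base n x y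
  | succ m ih =>
    rw [show m + 1 + 1 = m + 2 from rfl, cb_split n m x (x + y)]
    have hL := cb_shift m n x y
    have hpow : (x + y) ^ (m + 1 + n + 1) = (x + y) * (x + y) ^ (m + n + 1) := by
      rw [show m + 1 + n + 1 = (m + n + 1) + 1 from by omega, pow_succ]; ring
    rw [hpow, ih]
    have hc : (n + m + 1).choose (m + 1) = (m + n + 1).choose n := by
      rw [show n + m + 1 = m + n + 1 from by omega,
        show m + 1 = m + n + 1 - n from by omega, Nat.choose_symm (by omega)]
    have hcR : ((n + m + 1).choose (m + 1) : R) = ((m + n + 1).choose n : R) := by rw [hc]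
    rw [hcR]
    linear_combination x ^ (m + 1) * hL
end

section
/- For all nonnegative integers m, n and complex x, (1-x)^(m+n+1) = Σ_{k=0}^{m} C(n+k,k) (-1)^k x^k (1-x)^(m-k) + (-1)^(m+1) x^(m+1) Σ_{k=0}^{n} C(m+k,k) (1-x)^(n-k). -/
set_option maxRecDepth 8000

private lemma tele (a b : ℂ) (M : ℕ) :
    (b - a) * ∑ k ∈ Finset.range (M + 1), a ^ k * b ^ (M - k)
      = b ^ (M + 1) - a ^ (M + 1) := by
  induction M with
  | zero => simp
  | succ M ih =>
    rw [Finset.sum_range_succ]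
    have h : ∑ k ∈ Finset.range (M + 1), a ^ k * b ^ (M + 1 - k)
        = b * ∑ k ∈ Finset.range (M + 1), a ^ k * b ^ (M - k) := by
      rw [Finset.mul_sum]
      refine Finset.sum_congr rfl fun i hi => ?_
      have : M + 1 - i = (M - i) + 1 := by
        have := Finset.mem_range.mp hi; omega
      rw [this]; ring
    rw [h, Nat.sub_self, pow_zero]
    linear_combination b * ih

private lemma S1rec (m n : ℕ) (x : ℂ) :
    ∑ k ∈ Finset.range (m + 1 + 1),
        ((n + 1 + k).choose k : ℂ) * (-1) ^ k * x ^ k * (1 - x) ^ (m + 1 - k)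
      = ∑ k ∈ Finset.range (m + 1 + 1),
          ((n + k).choose k : ℂ) * (-1) ^ k * x ^ k * (1 - x) ^ (m + 1 - k)
        - x * ∑ k ∈ Finset.range (m + 1),
            ((n + 1 + k).choose k : ℂ) * (-1) ^ k * x ^ k * (1 - x) ^ (m - k) := by
  rw [Finset.sum_range_succ' _ (m + 1), Finset.sum_range_succ'
    (fun k => ((n + k).choose k : ℂ) * (-1) ^ k * x ^ k * (1 - x) ^ (m + 1 - k)) (m + 1),
    Finset.mul_sum]
  have H : (∑ i ∈ Finset.range (m + 1),
        ((n + 1 + (i + 1)).choose (i + 1) : ℂ) * (-1) ^ (i + 1) * x ^ (i + 1)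
          * (1 - x) ^ (m + 1 - (i + 1)))
      = ∑ i ∈ Finset.range (m + 1),
          (((n + (i + 1)).choose (i + 1) : ℂ) * (-1) ^ (i + 1) * x ^ (i + 1)
              * (1 - x) ^ (m + 1 - (i + 1))
            - x * (((n + 1 + i).choose i : ℂ) * (-1) ^ i * x ^ i * (1 - x) ^ (m - i))) := by
    refine Finset.sum_congr rfl fun i hi => ?_
    rw [show n + 1 + (i + 1) = (n + 1 + i) + 1 from by omega, Nat.choose_succ_succ,
      show n + (i + 1) = n + 1 + i from by omega,
      show m + 1 - (i + 1) = m - i from by omega]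
    push_cast
    ring
  rw [Finset.sum_sub_distrib] at H
  simp only [Nat.add_zero, Nat.choose_zero_right, Nat.cast_one, pow_zero, one_mul, mul_one,
    Nat.sub_zero]
  linear_combination H

private lemma Trec (m n : ℕ) (x : ℂ) :
    ∑ k ∈ Finset.range (n + 1 + 1),
        ((m + 1 + k).choose k : ℂ) * (1 - x) ^ (n + 1 - k)
      = ∑ k ∈ Finset.range (n + 1),
          ((m + 1 + k).choose k : ℂ) * (1 - x) ^ (n - k)
        + ∑ k ∈ Finset.range (n + 1 + 1),
            ((m + k).choose k : ℂ) * (1 - x) ^ (n + 1 - k) := by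
  rw [Finset.sum_range_succ' _ (n + 1), Finset.sum_range_succ'
    (fun k => ((m + k).choose k : ℂ) * (1 - x) ^ (n + 1 - k)) (n + 1)]
  have H : (∑ i ∈ Finset.range (n + 1),
        ((m + 1 + (i + 1)).choose (i + 1) : ℂ) * (1 - x) ^ (n + 1 - (i + 1)))
      = ∑ i ∈ Finset.range (n + 1),
          (((m + 1 + i).choose i : ℂ) * (1 - x) ^ (n - i)
            + ((m + (i + 1)).choose (i + 1) : ℂ) * (1 - x) ^ (n + 1 - (i + 1))) := by
    refine Finset.sum_congr rfl fun i hi => ?_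
    rw [show m + 1 + (i + 1) = (m + 1 + i) + 1 from by omega, Nat.choose_succ_succ,
      show m + (i + 1) = m + 1 + i from by omega,
      show n + 1 - (i + 1) = n - i from by omega]
    push_cast
    ring
  rw [Finset.sum_add_distrib] at H
  simp only [Nat.add_zero, Nat.choose_zero_right, Nat.cast_one, pow_zero, one_mul, mul_one,
    Nat.sub_zero]
  linear_combination H

theorem chaundy_bullard_variant (m n : ℕ) (x : ℂ) :
    (1 - x) ^ (m + n + 1)
      = ∑ k ∈ Finset.range (m + 1),
          ((n + k).choose k : ℂ) * (-1) ^ k * x ^ k * (1 - x) ^ (m - k)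
      + (-1) ^ (m + 1) * x ^ (m + 1) * ∑ k ∈ Finset.range (n + 1),
          ((m + k).choose k : ℂ) * (1 - x) ^ (n - k) := by
  induction m generalizing n with
  | zero =>
    have h := tele 1 (1 - x) n
    simp only [one_pow, one_mul] at h
    simp only [Nat.zero_add, Finset.sum_range_one, Nat.choose_self, Nat.add_zero,
      Nat.choose_zero_right, Nat.cast_one, one_mul, pow_zero, Nat.sub_self]
    linear_combination -h
  | succ m ihm =>
    induction n with
    | zero =>
      have h := tele (-x) (1 - x) (m + 1)
      have h1 : (1 - x) - (-x) = (1 : ℂ) := by ring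
      rw [h1, one_mul] at h
      have hs : ∑ k ∈ Finset.range (m + 1 + 1),
          ((0 + k).choose k : ℂ) * (-1) ^ k * x ^ k * (1 - x) ^ (m + 1 - k)
          = ∑ k ∈ Finset.range (m + 1 + 1), (-x) ^ k * (1 - x) ^ (m + 1 - k) := by
        refine Finset.sum_congr rfl fun i _ => ?_
        rw [Nat.zero_add, Nat.choose_self, Nat.cast_one, one_mul]
        ring
      rw [hs]
      simp only [Nat.zero_add, Finset.sum_range_one, Nat.add_zero, Nat.choose_zero_right,
        Nat.cast_one, Nat.sub_zero, pow_zero, mul_one, one_mul, Nat.sub_self]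
      linear_combination -h
    | succ n ihn =>
      linear_combination ihn - x * ihm (n + 1) - S1rec m n x
        - ((-1) ^ (m + 1 + 1) * x ^ (m + 1 + 1)) * Trec m n x
end

section
/- For all nonnegative integers m, n there exist unique polynomials Q1 of degree ≤ m and Q2 of degree ≤ n over ℂ(q) such that 1 = (x;q)_{n+1} Q1(x) + x^{m+1} Q2(x), and Q1(x) = Σ_{k=0}^{m} qbinom(n+k,k) x^k. -/
/-- The q-shifted factorial (x;q)_n in the field ℂ(q) of rational functions. -/
noncomputable def qPochF (x q : RatFunc ℂ) (n : ℕ) : RatFunc ℂ :=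
  ∏ l ∈ Finset.range n, (1 - x * q ^ l)

/-- The Gaussian binomial coefficient, as an element of ℂ(q) with q = RatFunc.X. -/
noncomputable def qbinomF (n k : ℕ) : RatFunc ℂ :=
  qPochF RatFunc.X RatFunc.X n / (qPochF RatFunc.X RatFunc.X k * qPochF RatFunc.X RatFunc.X (n - k))

open Polynomial

lemma one_sub_Xpow_ne (i : ℕ) : (1 : RatFunc ℂ) - RatFunc.X ^ (i + 1) ≠ 0 := by
  rw [sub_ne_zero]
  intro h
  have h1 : (algebraMap (Polynomial ℂ) (RatFunc ℂ)) (X ^ (i + 1))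
      = (algebraMap (Polynomial ℂ) (RatFunc ℂ)) 1 := by
    rw [map_pow, map_one, RatFunc.algebraMap_X]; exact h.symm
  have h2 := RatFunc.algebraMap_injective ℂ h1
  have h3 := congrArg natDegree h2
  simp [natDegree_X_pow] at h3

lemma qPochF_zero' : qPochF RatFunc.X RatFunc.X 0 = 1 := by unfold qPochF; simp

lemma qPoch_ne (j : ℕ) : qPochF RatFunc.X RatFunc.X j ≠ 0 := by
  unfold qPochF
  rw [Finset.prod_ne_zero_iff]
  intro l _
  rw [show RatFunc.X * RatFunc.X ^ l = RatFunc.X ^ (l + 1) from by ring]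
  exact one_sub_Xpow_ne l

lemma qPoch_succ (j : ℕ) :
    qPochF RatFunc.X RatFunc.X (j + 1)
      = qPochF RatFunc.X RatFunc.X j * (1 - RatFunc.X ^ (j + 1)) := by
  unfold qPochF
  rw [Finset.prod_range_succ, show RatFunc.X * RatFunc.X ^ j = RatFunc.X ^ (j + 1) from by ring]

lemma qbinomF_zero (n : ℕ) : qbinomF n 0 = 1 := by
  unfold qbinomF
  rw [Nat.sub_zero, qPochF_zero', one_mul, div_self (qPoch_ne n)]

lemma qbinomF_diag (k : ℕ) : qbinomF k k = 1 := by
  unfold qbinomF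
  rw [Nat.sub_self, qPochF_zero', mul_one, div_self (qPoch_ne k)]

lemma qbinom_pascal (n k : ℕ) :
    qbinomF (n + 1 + (k + 1)) (k + 1)
      = qbinomF (n + (k + 1)) (k + 1) + RatFunc.X ^ (n + 1) * qbinomF (n + 1 + k) k := by
  unfold qbinomF
  have e1 : n + 1 + (k + 1) - (k + 1) = n + 1 := by omega
  have e2 : n + (k + 1) - (k + 1) = n := by omega
  have e3 : n + 1 + k - k = n + 1 := by omega
  have r0 : n + 1 + (k + 1) = n + k + 1 + 1 := by omega
  have r1 : n + (k + 1) = n + k + 1 := by omega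
  have r2 : n + 1 + k = n + k + 1 := by omega
  rw [e1, e2, e3, r0, r1, r2, qPoch_succ (n + k + 1), qPoch_succ (n + k), qPoch_succ k,
    qPoch_succ n]
  have h2 := qPoch_ne (n + k)
  have h3 := qPoch_ne k
  have h4 := qPoch_ne n
  have h5 := one_sub_Xpow_ne k
  have h6 := one_sub_Xpow_ne n
  field_simp
  ring

/-- The product polynomial (x;q)_{n+1} as a polynomial over ℂ(q). -/
noncomputable def Pb (n : ℕ) : Polynomial (RatFunc ℂ) :=
  ∏ l ∈ Finset.range (n + 1), (1 - C ((RatFunc.X : RatFunc ℂ) ^ l) * X)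

/-- The candidate Bézout polynomial Q₁. -/
noncomputable def Sb (n m : ℕ) : Polynomial (RatFunc ℂ) :=
  ∑ k ∈ Finset.range (m + 1), C (qbinomF (n + k) k) * X ^ k

lemma coeff_Sb (n m d : ℕ) :
    (Sb n m).coeff d = if d < m + 1 then qbinomF (n + d) d else 0 := by
  unfold Sb
  rw [finset_sum_coeff]
  simp [coeff_C_mul, coeff_X_pow, Finset.sum_ite_eq, Finset.mem_range]

lemma key_step (m n : ℕ) :
    (X : Polynomial (RatFunc ℂ)) ^ (m + 1)
      ∣ (1 - C ((RatFunc.X : RatFunc ℂ) ^ (n + 1)) * X) * Sb (n + 1) m - Sb n m := by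
  rw [X_pow_dvd_iff]
  intro d hd
  rw [sub_mul, one_mul, mul_assoc, coeff_sub, coeff_sub, coeff_C_mul]
  match d with
  | 0 =>
    rw [mul_coeff_zero, coeff_X_zero, zero_mul, mul_zero, coeff_Sb, coeff_Sb]
    simp [qbinomF_zero]
  | e + 1 =>
    rw [coeff_X_mul, coeff_Sb, coeff_Sb, coeff_Sb, if_pos hd, if_pos hd,
      if_pos (by omega : e < m + 1)]
    rw [qbinom_pascal n e]
    ring

lemma dvd_main (m n : ℕ) :
    (X : Polynomial (RatFunc ℂ)) ^ (m + 1) ∣ Pb n * Sb n m - 1 := by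
  induction n with
  | zero =>
    have hP : Pb 0 = 1 - X := by
      unfold Pb; rw [Finset.prod_range_one, pow_zero, map_one, one_mul]
    have hS : Sb 0 m = ∑ k ∈ Finset.range (m + 1), (X : Polynomial (RatFunc ℂ)) ^ k :=
      Finset.sum_congr rfl fun k _ => by rw [Nat.zero_add, qbinomF_diag, map_one, one_mul]
    have hg := geom_sum_mul (X : Polynomial (RatFunc ℂ)) (m + 1)
    exact ⟨-1, by rw [hP, hS]; linear_combination -hg⟩
  | succ n ih =>
    obtain ⟨a, ha⟩ := key_step m n
    obtain ⟨b, hb⟩ := ih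
    refine ⟨Pb n * a + b, ?_⟩
    have hPsucc : Pb (n + 1) = Pb n * (1 - C ((RatFunc.X : RatFunc ℂ) ^ (n + 1)) * X) := by
      unfold Pb; rw [Finset.prod_range_succ]
    rw [hPsucc]
    linear_combination Pb n * ha + hb

lemma deg_Sb (n m : ℕ) : (Sb n m).natDegree ≤ m := by
  unfold Sb
  refine natDegree_sum_le_of_forall_le _ _ fun k hk => ?_
  exact le_trans (natDegree_C_mul_X_pow_le _ _)
    (Nat.lt_succ_iff.mp (Finset.mem_range.mp hk))

lemma deg_Pb (n : ℕ) : (Pb n).natDegree ≤ n + 1 := by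
  unfold Pb
  refine le_trans (natDegree_prod_le _ _) ?_
  calc ∑ l ∈ Finset.range (n + 1), (1 - C ((RatFunc.X : RatFunc ℂ) ^ l) * X).natDegree
      ≤ ∑ _l ∈ Finset.range (n + 1), 1 := by
        refine Finset.sum_le_sum fun l _ => ?_
        refine le_trans (natDegree_sub_le _ _) ?_
        simp only [natDegree_one, max_le_iff]
        exact ⟨Nat.zero_le _, le_trans (natDegree_C_mul_le _ _) natDegree_X_le⟩
    _ = n + 1 := by simp

lemma X_not_dvd_Pb (n : ℕ) : ¬ (X : Polynomial (RatFunc ℂ)) ∣ Pb n := by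
  rw [X_dvd_iff]
  have : (Pb n).coeff 0 = 1 := by
    rw [coeff_zero_eq_eval_zero]
    unfold Pb
    simp [eval_prod]
  rw [this]
  exact one_ne_zero

lemma uniq (m n : ℕ) {Q1 Q2 Q1' Q2' : Polynomial (RatFunc ℂ)}
    (h1 : Q1.natDegree ≤ m) (h1' : Q1'.natDegree ≤ m)
    (e : 1 = Pb n * Q1 + X ^ (m + 1) * Q2)
    (e' : 1 = Pb n * Q1' + X ^ (m + 1) * Q2') : Q1 = Q1' ∧ Q2 = Q2' := by
  have hd : (X : Polynomial (RatFunc ℂ)) ^ (m + 1) ∣ Pb n * (Q1 - Q1') :=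
    ⟨Q2' - Q2, by linear_combination e' - e⟩
  have h2 : (X : Polynomial (RatFunc ℂ)) ^ (m + 1) ∣ (Q1 - Q1') :=
    Polynomial.prime_X.pow_dvd_of_dvd_mul_left _ (X_not_dvd_Pb n) hd
  have hz : Q1 - Q1' = 0 := by
    by_contra h
    have hle := natDegree_le_of_dvd h2 h
    rw [natDegree_X_pow] at hle
    have := natDegree_sub_le Q1 Q1'
    omega
  have hQ1 : Q1 = Q1' := sub_eq_zero.mp hz
  refine ⟨hQ1, ?_⟩
  have hx : (X : Polynomial (RatFunc ℂ)) ^ (m + 1) * Q2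
      = (X : Polynomial (RatFunc ℂ)) ^ (m + 1) * Q2' := by
    rw [hQ1] at e
    linear_combination e' - e
  exact mul_left_cancel₀ (pow_ne_zero _ Polynomial.X_ne_zero) hx

/-- Bézout interpretation of the q-Chaundy–Bullard identity over ℂ(q). -/
theorem chaundy_bullard_q_bezout (m n : ℕ) :
    (∃! Q : Polynomial (RatFunc ℂ) × Polynomial (RatFunc ℂ),
      Q.1.natDegree ≤ m ∧ Q.2.natDegree ≤ n ∧
      1 = (∏ l ∈ Finset.range (n + 1),
            (1 - Polynomial.C ((RatFunc.X : RatFunc ℂ) ^ l) * Polynomial.X)) * Q.1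
        + Polynomial.X ^ (m + 1) * Q.2)
    ∧ ∀ Q₁ Q₂ : Polynomial (RatFunc ℂ), Q₁.natDegree ≤ m → Q₂.natDegree ≤ n →
        1 = (∏ l ∈ Finset.range (n + 1),
              (1 - Polynomial.C ((RatFunc.X : RatFunc ℂ) ^ l) * Polynomial.X)) * Q₁
          + Polynomial.X ^ (m + 1) * Q₂ →
        Q₁ = ∑ k ∈ Finset.range (m + 1), Polynomial.C (qbinomF (n + k) k) * Polynomial.X ^ k := by
  have hPb : (∏ l ∈ Finset.range (n + 1),
      (1 - Polynomial.C ((RatFunc.X : RatFunc ℂ) ^ l) * Polynomial.X)) = Pb n := rfl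
  obtain ⟨c, hc⟩ := dvd_main m n
  have ident : 1 = Pb n * Sb n m + X ^ (m + 1) * (-c) := by linear_combination -hc
  have degc : (-c : Polynomial (RatFunc ℂ)).natDegree ≤ n := by
    rw [natDegree_neg]
    by_cases hc0 : c = 0
    · simp [hc0]
    · have h1 : ((X : Polynomial (RatFunc ℂ)) ^ (m + 1) * c).natDegree = m + 1 + c.natDegree := by
        rw [natDegree_mul (pow_ne_zero _ Polynomial.X_ne_zero) hc0, natDegree_X_pow]
      have h2 : (Pb n * Sb n m - 1).natDegree ≤ n + 1 + m := by
        refine le_trans (natDegree_sub_le _ _) ?_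
        simp only [natDegree_one, max_le_iff]
        refine ⟨le_trans (natDegree_mul_le) ?_, Nat.zero_le _⟩
        have := deg_Pb n
        have := deg_Sb n m
        omega
      rw [hc, h1] at h2
      omega
  constructor
  · refine ⟨(Sb n m, -c), ⟨deg_Sb n m, degc, by rw [hPb]; exact ident⟩, ?_⟩
    rintro ⟨R1, R2⟩ ⟨hd1, hd2, heq⟩
    rw [hPb] at heq
    obtain ⟨u1, u2⟩ := uniq m n hd1 (deg_Sb n m) heq ident
    exact Prod.ext u1 u2
  · intro Q₁ Q₂ hd1 hd2 heq
    rw [hPb] at heq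
    exact (uniq m n hd1 (deg_Sb n m) heq ident).1
end

section
/- Let X, Y be elements of an associative algebra over a commutative ring containing an invertible element q, satisfying YX = qXY. Then for all nonnegative integers m, n: (X+Y)^{m+n+1} = Y^{n+1} Σ_{k=0}^{m} qbinom(n+k,k) q^{-(n+1)k} X^k (X+Y)^{m-k} + X^{m+1} Σ_{k=0}^{n} qbinom(m+k,k)_{q→q^{-1}} q^{(m+1)k} Y^k (X+Y)^{n-k}. -/
/-- The Gaussian binomial coefficient as a polynomial in q over ℤ,
via the q-Pascal recursion [n+1, k+1] = [n, k] + q^(k+1) [n, k+1]. -/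
noncomputable def qbinomPoly : ℕ → ℕ → Polynomial ℤ
  | _, 0 => 1
  | 0, _ + 1 => 0
  | n + 1, k + 1 => qbinomPoly n k + Polynomial.X ^ (k + 1) * qbinomPoly n (k + 1)

lemma qbinomPoly_zero (n : ℕ) : qbinomPoly n 0 = 1 := by cases n <;> rfl

lemma qbinomPoly_pascal (n k : ℕ) :
    qbinomPoly (n+1) (k+1) = qbinomPoly n k + Polynomial.X ^ (k + 1) * qbinomPoly n (k + 1) := rfl

lemma qbinomPoly_eq_zero : ∀ n k : ℕ, n < k → qbinomPoly n k = 0 := by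
  intro n
  induction n with
  | zero => intro k hk; cases k with
    | zero => omega
    | succ k => rfl
  | succ n ih =>
    intro k hk
    cases k with
    | zero => omega
    | succ k =>
      rw [qbinomPoly_pascal, ih k (by omega), ih (k+1) (by omega)]
      ring

lemma qbinomPoly_diag : ∀ k : ℕ, qbinomPoly k k = 1 := by
  intro k; induction k with
  | zero => rfl
  | succ k ih => rw [qbinomPoly_pascal, ih, qbinomPoly_eq_zero k (k+1) (by omega)]; ring

lemma chaundy_bullard_master {R : Type*} [CommRing R] {A : Type*} [Ring A] [Algebra R A]
    (q : Rˣ) (X Y : A) (h : Y * X = (q : R) • (X * Y))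
    (a b : ℕ → ℕ → R)
    (ha0 : ∀ n, a n 0 = 1) (hb0 : ∀ m, b m 0 = 1)
    (haS : ∀ n k, a (n+1) (k+1) = ((q⁻¹ : Rˣ) : R)^(n+2) * a (n+1) k + a n (k+1))
    (haZ : ∀ k, a 0 (k+1) = ((q⁻¹ : Rˣ) : R) * a 0 k)
    (hbS : ∀ m k, b (m+1) (k+1) = b m (k+1) + (q : R)^(m+2) * b (m+1) k)
    (hbZ : ∀ k, b 0 (k+1) = (q : R) * b 0 k) :
    ∀ m n : ℕ, (X + Y) ^ (m + n + 1)
      = Y ^ (n+1) * ∑ k ∈ Finset.range (m+1), a n k • (X^k * (X+Y)^(m-k))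
      + X ^ (m+1) * ∑ k ∈ Finset.range (n+1), b m k • (Y^k * (X+Y)^(n-k)) := by
  set qi : R := ((q⁻¹ : Rˣ) : R) with hqidef
  have hq1 : (q : R) * qi = 1 := q.mul_inv
  have hXY : X * Y = qi • (Y * X) := by
    rw [h, smul_smul, mul_comm qi, hq1, one_smul]
  have hXYp : ∀ j, X * Y^j = qi^j • (Y^j * X) := by
    intro j; induction j with
    | zero => simp
    | succ j ih =>
      rw [pow_succ' Y j, ← mul_assoc, hXY, smul_mul_assoc, mul_assoc, ih,
        mul_smul_comm, smul_smul, ← mul_assoc, pow_succ' qi j, mul_comm qi (qi^j)]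
  have hYXp : ∀ j, Y * X^j = ((q:R))^j • (X^j * Y) := by
    intro j; induction j with
    | zero => simp
    | succ j ih =>
      rw [pow_succ' X j, ← mul_assoc, h, smul_mul_assoc, mul_assoc, ih,
        mul_smul_comm, smul_smul, ← mul_assoc, pow_succ' ((q:R)) j, mul_comm ((q:R)) _]
  have keyX : ∀ (j : ℕ) (s : Finset ℕ) (c : ℕ → R) (t : ℕ → A),
      X * (Y^j * ∑ k ∈ s, c k • t k) = Y^j * ∑ k ∈ s, (qi^j * c k) • (X * t k) := by
    intro j s c t
    calc X * (Y^j * ∑ k ∈ s, c k • t k) = (X * Y^j) * ∑ k ∈ s, c k • t k := (mul_assoc _ _ _).symm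
      _ = qi^j • ((Y^j * X) * ∑ k ∈ s, c k • t k) := by rw [hXYp j, smul_mul_assoc]
      _ = Y^j * (qi^j • (X * ∑ k ∈ s, c k • t k)) := by rw [mul_assoc, mul_smul_comm]
      _ = Y^j * ∑ k ∈ s, (qi^j * c k) • (X * t k) := by
          rw [Finset.mul_sum, Finset.smul_sum]
          congr 1
          refine Finset.sum_congr rfl fun k _ => ?_
          rw [mul_smul_comm, smul_smul]
  have keyY : ∀ (j : ℕ) (s : Finset ℕ) (c : ℕ → R) (t : ℕ → A),
      Y * (X^j * ∑ k ∈ s, c k • t k) = X^j * ∑ k ∈ s, ((q:R)^j * c k) • (Y * t k) := by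
    intro j s c t
    calc Y * (X^j * ∑ k ∈ s, c k • t k) = (Y * X^j) * ∑ k ∈ s, c k • t k := (mul_assoc _ _ _).symm
      _ = ((q:R)^j) • ((X^j * Y) * ∑ k ∈ s, c k • t k) := by rw [hYXp j, smul_mul_assoc]
      _ = X^j * (((q:R)^j) • (Y * ∑ k ∈ s, c k • t k)) := by rw [mul_assoc, mul_smul_comm]
      _ = X^j * ∑ k ∈ s, ((q:R)^j * c k) • (Y * t k) := by
          rw [Finset.mul_sum, Finset.smul_sum]
          congr 1
          refine Finset.sum_congr rfl fun k _ => ?_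
          rw [mul_smul_comm, smul_smul]
  intro m
  induction m with
  | zero =>
    intro n
    induction n with
    | zero =>
      simp [ha0, hb0]
      abel
    | succ n ihn =>
      have e1 : 0+(n+1)+1 = (0+n+1)+1 := by omega
      rw [e1, pow_succ', add_mul]
      nth_rewrite 2 [ihn]
      rw [mul_add, keyY 1,
        Finset.sum_range_succ' (fun k => b 0 k • (Y ^ k * (X + Y) ^ (n + 1 - k))) (n+1)]
      have hsum : ∑ k ∈ Finset.range (n+1), ((q:R)^1 * b 0 k) • (Y * (Y^k * (X+Y)^(n-k)))
          = ∑ k ∈ Finset.range (n+1), b 0 (k+1) • (Y^(k+1) * (X+Y)^(n+1-(k+1))) := by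
        refine Finset.sum_congr rfl fun k _ => ?_
        rw [hbZ, pow_one, Nat.succ_sub_succ, ← mul_assoc, ← pow_succ']
      rw [hsum, mul_add]
      simp only [Finset.sum_range_one, ha0, hb0, pow_zero, one_smul, one_mul, mul_one,
        Nat.sub_zero, Nat.zero_add, pow_one, Nat.succ_sub_succ]
      rw [← pow_succ' Y (n+1)]
      abel
  | succ m ihm =>
    intro n
    induction n with
    | zero =>
      have e1 : (m+1)+0+1 = (m+0+1)+1 := by omega
      rw [e1, pow_succ', add_mul]
      nth_rewrite 1 [ihm 0]
      rw [mul_add, keyX 1,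
        Finset.sum_range_succ' (fun k => a 0 k • (X ^ k * (X + Y) ^ (m + 1 - k))) (m+1)]
      have hsum : ∑ k ∈ Finset.range (m+1), (qi^1 * a 0 k) • (X * (X^k * (X+Y)^(m-k)))
          = ∑ k ∈ Finset.range (m+1), a 0 (k+1) • (X^(k+1) * (X+Y)^(m+1-(k+1))) := by
        refine Finset.sum_congr rfl fun k _ => ?_
        rw [haZ, pow_one, Nat.succ_sub_succ, ← mul_assoc, ← pow_succ']
      rw [hsum, mul_add]
      simp only [Finset.sum_range_one, ha0, hb0, pow_zero, one_smul, one_mul, mul_one,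
        Nat.sub_zero, Nat.zero_add, pow_one, Nat.succ_sub_succ, Nat.add_zero]
      rw [← pow_succ' X (m+1)]
      abel
    | succ n ihn =>
      have e1 : (m+1)+(n+1)+1 = (m+(n+1)+1)+1 := by omega
      have e2 : m+(n+1)+1 = (m+1)+n+1 := by omega
      rw [e1, pow_succ', add_mul]
      nth_rewrite 1 [ihm (n+1)]
      rw [e2, ihn, mul_add, mul_add, keyX (n+2), keyY (m+2)]
      have hS1 : (∑ k ∈ Finset.range (m+1+1), a (n+1) k • (X^k * (X+Y)^(m+1-k)))
          = (∑ k ∈ Finset.range (m+1), (qi^(n+2) * a (n+1) k) • (X * (X^k * (X+Y)^(m-k))))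
            + ∑ k ∈ Finset.range (m+1+1), a n k • (X^k * (X+Y)^(m+1-k)) := by
        rw [Finset.sum_range_succ' (fun k => a (n+1) k • (X^k * (X+Y)^(m+1-k))) (m+1),
            Finset.sum_range_succ' (fun k => a n k • (X^k * (X+Y)^(m+1-k))) (m+1)]
        have hc : ∀ k ∈ Finset.range (m+1), a (n+1) (k+1) • (X^(k+1) * (X+Y)^(m+1-(k+1)))
            = (qi^(n+2) * a (n+1) k) • (X * (X^k * (X+Y)^(m-k)))
              + a n (k+1) • (X^(k+1) * (X+Y)^(m+1-(k+1))) := by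
          intro k _
          rw [haS, add_smul, Nat.succ_sub_succ, ← mul_assoc, ← pow_succ']
        rw [Finset.sum_congr rfl hc, Finset.sum_add_distrib, ha0, ha0]
        abel
      have hS2 : (∑ k ∈ Finset.range (n+1+1), b (m+1) k • (Y^k * (X+Y)^(n+1-k)))
          = (∑ k ∈ Finset.range (n+1+1), b m k • (Y^k * (X+Y)^(n+1-k)))
            + ∑ k ∈ Finset.range (n+1), ((q:R)^(m+2) * b (m+1) k) • (Y * (Y^k * (X+Y)^(n-k))) := by
        rw [Finset.sum_range_succ' (fun k => b (m+1) k • (Y^k * (X+Y)^(n+1-k))) (n+1),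
            Finset.sum_range_succ' (fun k => b m k • (Y^k * (X+Y)^(n+1-k))) (n+1)]
        have hc : ∀ k ∈ Finset.range (n+1), b (m+1) (k+1) • (Y^(k+1) * (X+Y)^(n+1-(k+1)))
            = b m (k+1) • (Y^(k+1) * (X+Y)^(n+1-(k+1)))
              + ((q:R)^(m+2) * b (m+1) k) • (Y * (Y^k * (X+Y)^(n-k))) := by
          intro k _
          rw [hbS, add_smul, Nat.succ_sub_succ, ← mul_assoc, ← pow_succ']
        rw [Finset.sum_congr rfl hc, Finset.sum_add_distrib, hb0, hb0]
        abel
      rw [hS1, hS2, mul_add, mul_add]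
      rw [← mul_assoc X (X^(m+1)), ← pow_succ' X (m+1), ← mul_assoc Y (Y^(n+1)), ← pow_succ' Y (n+1)]
      abel

/-- Homogeneous q-Chaundy–Bullard identity for q-commuting variables. -/
theorem chaundy_bullard_q_commuting {R : Type*} [CommRing R] {A : Type*} [Ring A]
    [Algebra R A] (q : Rˣ) (X Y : A) (h : Y * X = (q : R) • (X * Y)) (m n : ℕ) :
    (X + Y) ^ (m + n + 1)
      = Y ^ (n + 1) * ∑ k ∈ Finset.range (m + 1),
          (Polynomial.aeval (q : R) (qbinomPoly (n + k) k) * ((q⁻¹ : Rˣ) : R) ^ ((n + 1) * k))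
            • (X ^ k * (X + Y) ^ (m - k))
      + X ^ (m + 1) * ∑ k ∈ Finset.range (n + 1),
          (Polynomial.aeval ((q⁻¹ : Rˣ) : R) (qbinomPoly (m + k) k) * (q : R) ^ ((m + 1) * k))
            • (Y ^ k * (X + Y) ^ (n - k)) := by
  have hq1 : (q : R) * ((q⁻¹ : Rˣ) : R) = 1 := q.mul_inv
  refine chaundy_bullard_master q X Y h
    (fun n k => Polynomial.aeval (q : R) (qbinomPoly (n + k) k) * ((q⁻¹ : Rˣ) : R) ^ ((n + 1) * k))
    (fun m k => Polynomial.aeval ((q⁻¹ : Rˣ) : R) (qbinomPoly (m + k) k) * (q : R) ^ ((m + 1) * k))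
    (fun n => by simp [qbinomPoly_zero])
    (fun m => by simp [qbinomPoly_zero])
    (fun n k => ?_) (fun k => ?_) (fun m k => ?_) (fun k => ?_) m n
  · -- haS
    show Polynomial.aeval (q : R) (qbinomPoly ((n+1) + (k+1)) (k+1)) * ((q⁻¹ : Rˣ) : R) ^ ((n+1+1) * (k+1))
      = ((q⁻¹ : Rˣ) : R)^(n+2) * (Polynomial.aeval (q : R) (qbinomPoly ((n+1) + k) k) * ((q⁻¹ : Rˣ) : R) ^ ((n+1+1) * k))
        + Polynomial.aeval (q : R) (qbinomPoly (n + (k+1)) (k+1)) * ((q⁻¹ : Rˣ) : R) ^ ((n+1) * (k+1))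
    set qi : R := ((q⁻¹ : Rˣ) : R) with hqidef
    rw [show n+1+(k+1) = (n+1+k)+1 from rfl, qbinomPoly_pascal,
      show n+(k+1) = n+1+k by omega]
    rw [map_add, map_mul, map_pow, Polynomial.aeval_X]
    have h1 : qi^((n+1+1)*(k+1)) = qi^((n+1+1)*k)*qi^(n+2) := by
      rw [show (n+1+1)*(k+1) = (n+1+1)*k + (n+2) by ring, pow_add]
    have h2 : (q:R)^(k+1) * qi^((n+1+1)*(k+1)) = qi^((n+1)*(k+1)) := by
      rw [show (n+1+1)*(k+1) = (k+1) + (n+1)*(k+1) by ring]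
      nth_rewrite 2 [pow_add]
      rw [← mul_assoc, ← mul_pow, hq1, one_pow, one_mul]
    set P1 := Polynomial.aeval (q:R) (qbinomPoly (n+1+k) k)
    set P2 := Polynomial.aeval (q:R) (qbinomPoly (n+1+k) (k+1))
    linear_combination P1 * h1 + P2 * h2
  · -- haZ
    show Polynomial.aeval (q : R) (qbinomPoly (0 + (k+1)) (k+1)) * ((q⁻¹ : Rˣ) : R) ^ ((0+1) * (k+1))
      = ((q⁻¹ : Rˣ) : R) * (Polynomial.aeval (q : R) (qbinomPoly (0 + k) k) * ((q⁻¹ : Rˣ) : R) ^ ((0+1) * k))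
    simp only [Nat.zero_add, qbinomPoly_diag, map_one, one_mul, Nat.one_mul]
    rw [pow_succ']
  · -- hbS
    show Polynomial.aeval ((q⁻¹ : Rˣ) : R) (qbinomPoly ((m+1) + (k+1)) (k+1)) * (q : R) ^ ((m+1+1) * (k+1))
      = Polynomial.aeval ((q⁻¹ : Rˣ) : R) (qbinomPoly (m + (k+1)) (k+1)) * (q : R) ^ ((m+1) * (k+1))
        + (q:R)^(m+2) * (Polynomial.aeval ((q⁻¹ : Rˣ) : R) (qbinomPoly ((m+1) + k) k) * (q : R) ^ ((m+1+1) * k))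
    set qi : R := ((q⁻¹ : Rˣ) : R) with hqidef
    rw [show m+1+(k+1) = (m+1+k)+1 from rfl, qbinomPoly_pascal,
      show m+(k+1) = m+1+k by omega]
    rw [map_add, map_mul, map_pow, Polynomial.aeval_X]
    have h1 : (q:R)^((m+1+1)*(k+1)) = (q:R)^((m+1+1)*k)*(q:R)^(m+2) := by
      rw [show (m+1+1)*(k+1) = (m+1+1)*k + (m+2) by ring, pow_add]
    have h2 : qi^(k+1) * (q:R)^((m+1+1)*(k+1)) = (q:R)^((m+1)*(k+1)) := by
      rw [show (m+1+1)*(k+1) = (k+1) + (m+1)*(k+1) by ring]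
      nth_rewrite 2 [pow_add]
      rw [← mul_assoc, ← mul_pow, mul_comm qi ((q:R)), hq1, one_pow, one_mul]
    set P1 := Polynomial.aeval qi (qbinomPoly (m+1+k) k)
    set P2 := Polynomial.aeval qi (qbinomPoly (m+1+k) (k+1))
    linear_combination P1 * h1 + P2 * h2
  · -- hbZ
    show Polynomial.aeval ((q⁻¹ : Rˣ) : R) (qbinomPoly (0 + (k+1)) (k+1)) * (q : R) ^ ((0+1) * (k+1))
      = (q : R) * (Polynomial.aeval ((q⁻¹ : Rˣ) : R) (qbinomPoly (0 + k) k) * (q : R) ^ ((0+1) * k))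
    simp only [Nat.zero_add, qbinomPoly_diag, map_one, one_mul, Nat.one_mul]
    rw [pow_succ']
end

section
/- Let m, n be nonnegative integers, and let weights on lattice paths in the rectangle {0,...,m+1}×{0,...,n+1} be assigned as follows for a function h: the east step (i,j)→(i+1,j) has weight h(i,j) if j ≤ n and weight 1 if j = n+1; the north step (i,j)→(i,j+1) has weight 1-h(i,j) if i ≤ m and weight 1 if i = m+1. Define A(k,ℓ) as the sum over all monotone (east/north) lattice paths from (0,0) to (k,ℓ) of the products of their step weights. Then 1 = Σ_{k=0}^{m} (1-h(k,n)) A(k,n) + Σ_{ℓ=0}^{n} h(m,ℓ) A(m,ℓ). -/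
theorem lattice_path_aux {R : Type*} [CommRing R] (m : ℕ)
    (h : ℕ → ℕ → R) (A : ℕ → ℕ → R)
    (hA00 : A 0 0 = 1)
    (hAk0 : ∀ k : ℕ, k ≤ m → A k 0 = ∏ i ∈ Finset.range k, h i 0) :
    ∀ n : ℕ,
    (∀ ℓ : ℕ, ℓ ≤ n → A 0 ℓ = ∏ j ∈ Finset.range ℓ, (1 - h 0 j)) →
    (∀ k ℓ : ℕ, 1 ≤ k → k ≤ m → 1 ≤ ℓ → ℓ ≤ n →
      A k ℓ = h (k - 1) ℓ * A (k - 1) ℓ + (1 - h k (ℓ - 1)) * A k (ℓ - 1)) →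
    1 = ∑ k ∈ Finset.range (m + 1), (1 - h k n) * A k n
      + ∑ ℓ ∈ Finset.range (n + 1), h m ℓ * A m ℓ := by
  intro n
  induction n with
  | zero =>
    intro _ _
    have key : ∀ M : ℕ, M ≤ m →
        ∑ k ∈ Finset.range (M + 1), (1 - h k 0) * A k 0 + h M 0 * A M 0 = 1 := by
      intro M
      induction M with
      | zero => intro _; simp [hA00]
      | succ M ih =>
        intro hM
        have hM' : M ≤ m := le_trans (Nat.le_succ M) hM
        have hA : A (M + 1) 0 = h M 0 * A M 0 := by
          rw [hAk0 _ hM, hAk0 _ hM', Finset.prod_range_succ]; ring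
        rw [Finset.sum_range_succ, hA]
        have := ih hM'
        ring_nf
        ring_nf at this
        linear_combination this
    rw [Finset.sum_range_one]
    exact (key m le_rfl).symm
  | succ n ih =>
    intro hA0l hrec
    have hA0l' : ∀ ℓ : ℕ, ℓ ≤ n → A 0 ℓ = ∏ j ∈ Finset.range ℓ, (1 - h 0 j) :=
      fun ℓ hℓ => hA0l ℓ (le_trans hℓ (Nat.le_succ n))
    have hrec' : ∀ k ℓ : ℕ, 1 ≤ k → k ≤ m → 1 ≤ ℓ → ℓ ≤ n →
        A k ℓ = h (k - 1) ℓ * A (k - 1) ℓ + (1 - h k (ℓ - 1)) * A k (ℓ - 1) :=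
      fun k ℓ h1 h2 h3 h4 => hrec k ℓ h1 h2 h3 (le_trans h4 (Nat.le_succ n))
    have key : ∀ M : ℕ, M ≤ m →
        ∑ k ∈ Finset.range (M + 1), (1 - h k (n + 1)) * A k (n + 1)
          + h M (n + 1) * A M (n + 1)
        = ∑ k ∈ Finset.range (M + 1), (1 - h k n) * A k n := by
      intro M
      induction M with
      | zero =>
        intro _
        have hA : A 0 (n + 1) = (1 - h 0 n) * A 0 n := by
          rw [hA0l (n + 1) le_rfl, hA0l n (Nat.le_succ n), Finset.prod_range_succ]; ring
        rw [Finset.sum_range_one, Finset.sum_range_one, hA]; ring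
      | succ M ihM =>
        intro hM
        have hM' : M ≤ m := le_trans (Nat.le_succ M) hM
        have hA : A (M + 1) (n + 1)
            = h M (n + 1) * A M (n + 1) + (1 - h (M + 1) n) * A (M + 1) n := by
          have := hrec (M + 1) (n + 1) (Nat.succ_le_succ (Nat.zero_le M)) hM
            (Nat.succ_le_succ (Nat.zero_le n)) le_rfl
          exact this
        rw [Finset.sum_range_succ, Finset.sum_range_succ (n := M + 1)]
        have := ihM hM'
        linear_combination this + hA
    have hrw := key m le_rfl
    rw [Finset.sum_range_succ (f := fun ℓ => h m ℓ * A m ℓ) (n := n + 1)]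
    have := ih hA0l' hrec'
    linear_combination this - hrw

/-- Weighted lattice path decomposition underlying the Chaundy–Bullard extensions.
`A k ℓ` is the generating function of weighted monotone lattice paths from (0,0) to (k,ℓ),
characterized by its boundary values and recurrence. -/
theorem lattice_path_decomposition {R : Type*} [CommRing R] (m n : ℕ)
    (h : ℕ → ℕ → R) (A : ℕ → ℕ → R)
    (hA00 : A 0 0 = 1)
    (hAk0 : ∀ k : ℕ, k ≤ m → A k 0 = ∏ i ∈ Finset.range k, h i 0)
    (hA0l : ∀ ℓ : ℕ, ℓ ≤ n → A 0 ℓ = ∏ j ∈ Finset.range ℓ, (1 - h 0 j))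
    (hrec : ∀ k ℓ : ℕ, 1 ≤ k → k ≤ m → 1 ≤ ℓ → ℓ ≤ n →
      A k ℓ = h (k - 1) ℓ * A (k - 1) ℓ + (1 - h k (ℓ - 1)) * A k (ℓ - 1)) :
    1 = ∑ k ∈ Finset.range (m + 1), (1 - h k n) * A k n
      + ∑ ℓ ∈ Finset.range (n + 1), h m ℓ * A m ℓ :=
  lattice_path_aux m h A hA00 hAk0 n hA0l hrec
end
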